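/- Let s be the substitution on the alphabet {□, ■} with s(□) the 2×2 pattern having ■ at position (0,0) and □ at positions (1,0), (0,1), (1,1), and s(■) the 2×2 pattern having ■ at positions (0,0) and (1,1) and □ at positions (1,0), (0,1). Then the substitution subshift X_s is linearly net gluing. -/

import Mathlib

open Filter

abbrev Config (A : Type*) := ℤ × ℤ → A

def shiftC {A : Type*} (u : ℤ × ℤ) (x : Config A) : Config A := fun v => x (v + u)

def blockAt {A : Type*} (x : Config A) (u : ℤ × ℤ) (n : ℕ) : Fin n × Fin n → A :=
  fun v => x (u + (((v.1 : ℕ) : ℤ), ((v.2 : ℕ) : ℤ)))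

def IsSFT {A : Type*} (X : Set (Config A)) : Prop :=
  ∃ (r : ℕ) (F : Set (Fin r × Fin r → A)),
    X = {x : Config A | ∀ u : ℤ × ℤ, blockAt x u r ∉ F}

def Lang {A : Type*} (X : Set (Config A)) (n : ℕ) : Set (Fin n × Fin n → A) :=
  {p | ∃ x ∈ X, ∃ u : ℤ × ℤ, blockAt x u n = p}

def gluingSet {A : Type*} (X : Set (Config A)) {n : ℕ}
    (p q : Fin n × Fin n → A) : Set (ℤ × ℤ) :=
  {u | ∃ x ∈ X, blockAt x 0 n = q ∧ blockAt x u n = p}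

def normInf (u : ℤ × ℤ) : ℤ := max |u.1| |u.2|

def BlockGluing {A : Type*} (X : Set (Config A)) (f : ℕ → ℕ) : Prop :=
  ∀ n : ℕ, 1 ≤ n → ∀ p ∈ Lang X n, ∀ q ∈ Lang X n, ∀ u : ℤ × ℤ,
    (f n : ℤ) + (n : ℤ) ≤ normInf u → u ∈ gluingSet X p q

def NetGluing {A : Type*} (X : Set (Config A)) (f : ℕ → ℕ) : Prop :=
  ∃ (w : (n : ℕ) → (Fin n × Fin n → A) → (Fin n × Fin n → A) → ℤ × ℤ)
    (ft : (n : ℕ) → (Fin n × Fin n → A) → (Fin n × Fin n → A) → ℕ),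
    ∀ n : ℕ, ∀ p ∈ Lang X n, ∀ q ∈ Lang X n,
      (∀ v : ℤ × ℤ, v ≠ 0 →
        w n p q + ((n : ℤ) + (ft n p q : ℤ)) • v ∈ gluingSet X p q) ∧
      ft n p q ≤ f n

def LinearlyNetGluing {A : Type*} (X : Set (Config A)) : Prop :=
  ∃ g : ℕ → ℕ, Monotone g ∧ (∃ C : ℝ, 0 < C ∧ ∀ n : ℕ, (g n : ℝ) ≤ C * (n : ℝ)) ∧
    NetGluing X g

def boxSet (n : ℕ) : Set (ℤ × ℤ) :=
  {v | 0 ≤ v.1 ∧ v.1 < (n : ℤ) ∧ 0 ≤ v.2 ∧ v.2 < (n : ℤ)}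

/-- The 2×2 image of a letter under the substitution `s`: `■` at `(0,0)`, the letter
itself at `(1,1)`, and `□` elsewhere (`true` = `■`). -/
def sImg (a : Bool) (v : ℤ × ℤ) : Bool :=
  if v = (0, 0) then true else if v = (1, 1) then a else false

/-- `sIter n a` is the pattern `s^n(a)`, on support `⟦0,2^n-1⟧²`. -/
def sIter : ℕ → Bool → ℤ × ℤ → Bool
  | 0, a, _ => a
  | n + 1, a, v =>
      sIter n (sImg a (v.1 / 2 ^ n, v.2 / 2 ^ n)) (v.1 % 2 ^ n, v.2 % 2 ^ n)

/-- The substitution subshift `X_s`: configurations all of whose finite (square) patterns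
appear in some `s^n(a)`. -/
def Xsub : Set (Config Bool) :=
  {x | ∀ (k : ℕ) (u : ℤ × ℤ), ∃ (n : ℕ) (a : Bool) (w : ℤ × ℤ),
    (∀ v ∈ boxSet k, w + v ∈ boxSet (2 ^ n)) ∧
    ∀ v ∈ boxSet k, x (u + v) = sIter n a (w + v)}

/-!
Cell `v` of `s^m(a)` is black iff the two coordinates of `v + 1` have the same 2-adic valuation,
except at the top-right corner, which carries `a`. Hence every pattern of `X_s` occurs in the single
configuration `limitConfig v = twoValEq (v + 1)`. Translating `limitConfig` by `2^M • s` changes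
nothing except at the points with `v + 1 = 2^M • i`, whose colour is that of `i`, and an `n`-block
with `n ≤ 2^M` contains at most one such point, with index `c` say. Translating the occurrences of
`q` by `2^M • s` and of `p` by `2^M • (s + c_q - c_p + 1 + 2e)` therefore preserves both blocks as
soon as `z = c_q + s` has the colour of `c_q` and `z + 1 + 2e` that of `c_p`; such a `z` exists
because `1 + 2e` has odd coordinates. This glues `p` to `q` along a coset of `2^(M+1) ℤ²`, and
`2^(M+1) ≤ 4n`.
-/

lemma emultiplicity_pow_mul {α : Type*} [CommMonoidWithZero α] [IsCancelMulZero α] {p : α}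
    (hp : Prime p) (M : ℕ) (a : α) : emultiplicity p (p ^ M * a) = M + emultiplicity p a := by
  rw [emultiplicity_mul hp, emultiplicity_pow_self_of_prime hp]

lemma emultiplicity_add_pow_mul {α : Type*} [Ring α] {p a : α} {M : ℕ} (h : ¬ p ^ M ∣ a)
    (b : α) : emultiplicity p (a + p ^ M * b) = emultiplicity p a := by
  rw [add_comm]
  refine emultiplicity_add_of_gt ((emultiplicity_lt_iff_not_dvd.2 h).trans_le ?_)
  exact pow_dvd_iff_le_emultiplicity.1 (dvd_mul_right _ _)

/-- Since `emultiplicity 2 0 = ⊤`, the pair `(0, 0)` counts as having equal valuations. -/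
noncomputable def twoValEq (t : ℤ × ℤ) : Bool :=
  decide (emultiplicity (2 : ℤ) t.1 = emultiplicity 2 t.2)

section TwoValEq

variable {M : ℕ} {t : ℤ × ℤ}

lemma twoValEq_mk_self (a : ℤ) : twoValEq (a, a) = true := by
  simp [twoValEq]

lemma twoValEq_eq_false (h : (2 : ℤ) ^ M ∣ t.1 ↔ ¬ (2 : ℤ) ^ M ∣ t.2) : twoValEq t = false := by
  have key {a b : ℤ} (ha : (2 : ℤ) ^ M ∣ a) (hb : ¬ (2 : ℤ) ^ M ∣ b) :
      emultiplicity 2 b < emultiplicity 2 a :=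
    (emultiplicity_lt_iff_not_dvd.2 hb).trans_le (pow_dvd_iff_le_emultiplicity.1 ha)
  by_cases h₁ : (2 : ℤ) ^ M ∣ t.1
  · simpa [twoValEq] using (key h₁ (h.1 h₁)).ne'
  · simpa [twoValEq] using (key (not_not.1 (mt h.2 h₁)) h₁).ne

lemma twoValEq_eq_true_of_not_two_dvd (h₁ : ¬ (2 : ℤ) ∣ t.1) (h₂ : ¬ (2 : ℤ) ∣ t.2) :
    twoValEq t = true := by
  simp [twoValEq, emultiplicity_eq_zero.2 h₁, emultiplicity_eq_zero.2 h₂]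

lemma twoValEq_two_pow_smul (t : ℤ × ℤ) : twoValEq ((2 : ℤ) ^ M • t) = twoValEq t := by
  simp only [twoValEq, Prod.smul_fst, Prod.smul_snd, smul_eq_mul,
    emultiplicity_pow_mul Int.prime_two,
    (ENat.add_right_injective_of_ne_top (ENat.natCast_ne_top M)).eq_iff]

lemma twoValEq_add_two_pow_smul_of_not_dvd (h : ¬ ((2 : ℤ) ^ M ∣ t.1 ∧ (2 : ℤ) ^ M ∣ t.2))
    (s : ℤ × ℤ) : twoValEq (t + (2 : ℤ) ^ M • s) = twoValEq t := by
  have hdvd (a b : ℤ) : (2 : ℤ) ^ M ∣ a + 2 ^ M * b ↔ (2 : ℤ) ^ M ∣ a :=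
    dvd_add_left (dvd_mul_right _ _)
  by_cases hxor : (2 : ℤ) ^ M ∣ t.1 ↔ ¬ (2 : ℤ) ^ M ∣ t.2
  · rw [twoValEq_eq_false (M := M) (by simpa [hdvd] using hxor), twoValEq_eq_false hxor]
  · have h₁ : ¬ (2 : ℤ) ^ M ∣ t.1 := by tauto
    have h₂ : ¬ (2 : ℤ) ^ M ∣ t.2 := by tauto
    simp only [twoValEq, Prod.fst_add, Prod.snd_add, Prod.smul_fst, Prod.smul_snd, smul_eq_mul,
      emultiplicity_add_pow_mul h₁, emultiplicity_add_pow_mul h₂]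

lemma twoValEq_add_two_pow_smul (s : ℤ × ℤ)
    (h : ∀ i, t = (2 : ℤ) ^ M • i → twoValEq (i + s) = twoValEq i) :
    twoValEq (t + (2 : ℤ) ^ M • s) = twoValEq t := by
  by_cases hdvd : (2 : ℤ) ^ M ∣ t.1 ∧ (2 : ℤ) ^ M ∣ t.2
  · obtain ⟨⟨i₁, h₁⟩, ⟨i₂, h₂⟩⟩ := hdvd
    have ht : t = (2 : ℤ) ^ M • (i₁, i₂) := Prod.ext h₁ h₂
    rw [ht, ← smul_add, twoValEq_two_pow_smul, twoValEq_two_pow_smul, h _ ht]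
  · exact twoValEq_add_two_pow_smul_of_not_dvd hdvd s

lemma exists_twoValEq_and_twoValEq_add {d : ℤ × ℤ} (hd₁ : ¬ (2 : ℤ) ∣ d.1)
    (hd₂ : ¬ (2 : ℤ) ∣ d.2) (b b' : Bool) :
    ∃ z, twoValEq z = b ∧ twoValEq (z + d) = b' := by
  have h24 : twoValEq (2, 4) = false := twoValEq_eq_false (M := 2) (by norm_num)
  cases b <;> cases b'
  · exact ⟨(2, 1), twoValEq_eq_false (M := 1) (by norm_num),
      twoValEq_eq_false (M := 1) (by simp; omega)⟩
  · exact ⟨(2, 4), h24, twoValEq_eq_true_of_not_two_dvd (by simp; omega) (by simp; omega)⟩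
  · exact ⟨(2, 4) - d, twoValEq_eq_true_of_not_two_dvd (by simp; omega) (by simp; omega),
      by rwa [sub_add_cancel]⟩
  · exact ⟨(2, 2), twoValEq_mk_self 2,
      twoValEq_eq_true_of_not_two_dvd (by simp; omega) (by simp; omega)⟩

end TwoValEq

/-- `2 ^ M • coarseIndex M n y` is the only point of `2 ^ M • ℤ²` that can lie in
`y + 1 + ⟦0, n-1⟧²` when `n ≤ 2 ^ M`. -/
def coarseIndex (M n : ℕ) (y : ℤ × ℤ) : ℤ × ℤ := ((y.1 + n) / 2 ^ M, (y.2 + n) / 2 ^ M)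

lemma eq_coarseIndex {M n : ℕ} (hn : n ≤ 2 ^ M) {y v i : ℤ × ℤ} (hv : v ∈ boxSet n)
    (h : y + v + 1 = (2 : ℤ) ^ M • i) : i = coarseIndex M n y := by
  have hP : (0 : ℤ) < 2 ^ M := by positivity
  have hn' : (n : ℤ) ≤ 2 ^ M := by exact_mod_cast hn
  obtain ⟨h₁, h₂, h₃, h₄⟩ := hv
  have e₁ : y.1 + v.1 + 1 = 2 ^ M * i.1 := congrArg Prod.fst h
  have e₂ : y.2 + v.2 + 1 = 2 ^ M * i.2 := congrArg Prod.snd h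
  refine Prod.ext ?_ ?_
  · exact ((Int.ediv_emod_unique (r := n - 1 - v.1) hP).2
      ⟨by linarith, by linarith, by linarith⟩).1.symm
  · exact ((Int.ediv_emod_unique (r := n - 1 - v.2) hP).2
      ⟨by linarith, by linarith, by linarith⟩).1.symm

lemma eq_one_of_add_one_eq_two_pow_smul {m : ℕ} {z i : ℤ × ℤ} (hz : z ∈ boxSet (2 ^ m))
    (h : z + 1 = (2 : ℤ) ^ m • i) : i = 1 := by
  rw [eq_coarseIndex (y := 0) (i := i) le_rfl hz (by rwa [zero_add])]
  ext <;> simp [coarseIndex]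

lemma sImg_eq {a : Bool} {d : ℤ × ℤ} (hd : d ∈ boxSet 2) :
    sImg a d = if d = 1 then a else twoValEq (d + 1) := by
  obtain ⟨d₁, d₂⟩ := d
  obtain ⟨h₁, h₂, h₃, h₄⟩ := hd
  dsimp only at h₁ h₂ h₃ h₄
  interval_cases d₁ <;> interval_cases d₂
  all_goals simp only [sImg]; norm_num
  · exact twoValEq_mk_self 1
  · exact twoValEq_eq_false (M := 1) (t := (1, 2)) (by norm_num)
  · exact twoValEq_eq_false (M := 1) (t := (2, 1)) (by norm_num)

lemma add_one_eq_two_pow_succ_smul_one_iff {m : ℕ} {z : ℤ × ℤ} :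
    z + 1 = (2 : ℤ) ^ (m + 1) • 1 ↔
      (z.1 % 2 ^ m, z.2 % 2 ^ m) + 1 = (2 : ℤ) ^ m • 1 ∧ (z.1 / 2 ^ m, z.2 / 2 ^ m) = 1 := by
  have hP : (0 : ℤ) < 2 ^ m := by positivity
  have key (a : ℤ) : a + 1 = 2 ^ (m + 1) ↔ a % 2 ^ m + 1 = 2 ^ m ∧ a / 2 ^ m = 1 := by
    rw [pow_succ]
    constructor
    · intro h
      have := (Int.ediv_emod_unique (a := a) (q := 1) (r := 2 ^ m - 1) hP).2
        ⟨by linarith, by linarith, by linarith⟩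
      omega
    · rintro ⟨h₁, h₂⟩
      have := Int.mul_ediv_add_emod a (2 ^ m)
      rw [h₂] at this
      linarith
  simp only [Prod.ext_iff, Prod.fst_add, Prod.snd_add, Prod.smul_fst, Prod.smul_snd,
    Prod.fst_one, Prod.snd_one, smul_eq_mul, mul_one, key]
  tauto

lemma sIter_eq (m : ℕ) (a : Bool) {z : ℤ × ℤ} (hz : z ∈ boxSet (2 ^ m)) :
    sIter m a z = if z + 1 = (2 : ℤ) ^ m • 1 then a else twoValEq (z + 1) := by
  induction m generalizing a z with
  | zero =>
    obtain ⟨h₁, h₂, h₃, h₄⟩ := hz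
    have hz : z = 0 := by ext <;> simp at * <;> omega
    simp [sIter, hz]
  | succ m ih =>
    have hP : (0 : ℤ) < 2 ^ m := by positivity
    obtain ⟨h₁, h₂, h₃, h₄⟩ := hz
    push_cast [pow_succ] at h₂ h₄
    set d : ℤ × ℤ := (z.1 / 2 ^ m, z.2 / 2 ^ m) with hd_def
    set r : ℤ × ℤ := (z.1 % 2 ^ m, z.2 % 2 ^ m) with hr_def
    have hr : r ∈ boxSet (2 ^ m) := by
      refine ⟨Int.emod_nonneg _ hP.ne', ?_, Int.emod_nonneg _ hP.ne', ?_⟩ <;> push_cast <;>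
        exact Int.emod_lt_of_pos _ hP
    have hd : d ∈ boxSet 2 := by
      refine ⟨Int.ediv_nonneg h₁ hP.le, ?_, Int.ediv_nonneg h₃ hP.le, ?_⟩ <;> push_cast <;>
        exact Int.ediv_lt_of_lt_mul hP (by linarith)
    have hz : z + 1 = r + 1 + (2 : ℤ) ^ m • d := by
      ext <;> simp only [hr_def, hd_def, Prod.fst_add, Prod.snd_add, Prod.smul_fst,
        Prod.smul_snd, smul_eq_mul] <;> linarith [Int.mul_ediv_add_emod z.1 (2 ^ m),
          Int.mul_ediv_add_emod z.2 (2 ^ m)]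
    change sIter m (sImg a d) r = _
    simp only [ih _ hr, add_one_eq_two_pow_succ_smul_one_iff, ← hr_def, ← hd_def]
    rw [hz]
    by_cases hr₁ : r + 1 = (2 : ℤ) ^ m • 1
    · rw [if_pos hr₁, sImg_eq hd, hr₁, ← smul_add, twoValEq_two_pow_smul, add_comm]
      simp only [true_and]
    · rw [if_neg hr₁, if_neg (by tauto), twoValEq_add_two_pow_smul]
      intro i hi
      exact absurd (eq_one_of_add_one_eq_two_pow_smul hr hi ▸ hi) hr₁

noncomputable def limitConfig : Config Bool := fun v => twoValEq (v + 1)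

lemma sIter_true_eq {m : ℕ} {z : ℤ × ℤ} (hz : z ∈ boxSet (2 ^ m)) :
    sIter m true z = limitConfig z := by
  rw [sIter_eq m true hz, limitConfig]
  split_ifs with h
  · rw [h, twoValEq_two_pow_smul]
    exact (twoValEq_mk_self 1).symm
  · rfl

lemma exists_sIter_eq_limitConfig (m : ℕ) (a : Bool) :
    ∃ c, ∀ z ∈ boxSet (2 ^ m), sIter m a z = limitConfig (z + c) := by
  cases a
  · refine ⟨(2 : ℤ) ^ m • (1, 0), fun z hz => ?_⟩
    rw [sIter_eq m false hz, limitConfig, add_right_comm]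
    split_ifs with h
    · rw [h, ← smul_add, twoValEq_two_pow_smul]
      exact (twoValEq_eq_false (M := 1) (t := (2, 1)) (by norm_num)).symm
    · rw [twoValEq_add_two_pow_smul]
      intro i hi
      exact absurd (eq_one_of_add_one_eq_two_pow_smul hz hi ▸ hi) h
  · exact ⟨0, fun z hz => by rw [add_zero, sIter_true_eq hz]⟩

lemma limitConfig_mem_Xsub : limitConfig ∈ Xsub := by
  intro k u
  set N := u.1.natAbs + u.2.natAbs + k + 1
  have hN : |u.1| + |u.2| + k + 1 < (2 : ℤ) ^ N := by
    have : (N : ℤ) < 2 ^ N := by exact_mod_cast Nat.lt_two_pow_self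
    simpa [N] using this
  have hu₁ := abs_le.1 (le_refl |u.1|)
  have hu₂ := abs_le.1 (le_refl |u.2|)
  have hbox : ∀ v ∈ boxSet k, u + (2 : ℤ) ^ N • 1 + v ∈ boxSet (2 ^ (N + 1)) := by
    rintro v ⟨h₁, h₂, h₃, h₄⟩
    refine ⟨?_, ?_, ?_, ?_⟩ <;> push_cast [pow_succ] <;>
      simp only [Prod.fst_add, Prod.snd_add, Prod.smul_fst, Prod.smul_snd, Prod.fst_one,
        Prod.snd_one, smul_eq_mul, mul_one] <;> linarith [abs_nonneg u.1, abs_nonneg u.2]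
  refine ⟨N + 1, true, u + (2 : ℤ) ^ N • 1, hbox, fun v hv => ?_⟩
  rw [sIter_true_eq (hbox v hv), limitConfig, limitConfig,
    show u + (2 : ℤ) ^ N • 1 + v + 1 = u + v + 1 + (2 : ℤ) ^ N • 1 by abel,
    twoValEq_add_two_pow_smul]
  rintro i hi
  obtain ⟨h₁, h₂, h₃, h₄⟩ := hv
  have hsmall (t j : ℤ) (ht : t = 2 ^ N * j) (hlt : |t| < 2 ^ N) : j = 0 := by
    have := Int.eq_zero_of_abs_lt_dvd ⟨j, ht⟩ hlt
    simpa [this, eq_comm (a := (0 : ℤ))] using ht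
  have hi₁ := hsmall _ _ (congrArg Prod.fst hi) (abs_lt.2 ⟨by simp; linarith [abs_nonneg u.2],
    by simp; linarith [abs_nonneg u.2]⟩)
  have hi₂ := hsmall _ _ (congrArg Prod.snd hi) (abs_lt.2 ⟨by simp; linarith [abs_nonneg u.1],
    by simp; linarith [abs_nonneg u.1]⟩)
  rw [show i = 0 from Prod.ext hi₁ hi₂, zero_add]
  exact (twoValEq_mk_self 1).trans (twoValEq_mk_self 0).symm

lemma shiftC_mem_Xsub (c : ℤ × ℤ) {x : Config Bool} (hx : x ∈ Xsub) : shiftC c x ∈ Xsub := by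
  intro k u
  obtain ⟨n, a, w, hbox, heq⟩ := hx k (u + c)
  refine ⟨n, a, w, hbox, fun v hv => ?_⟩
  rw [shiftC, add_right_comm]
  exact heq v hv

lemma blockAt_shiftC {A : Type*} (c : ℤ × ℤ) (x : Config A) (u : ℤ × ℤ) (n : ℕ) :
    blockAt (shiftC c x) u n = blockAt x (u + c) n := by
  funext v
  simp only [blockAt, shiftC, add_right_comm]

lemma cast_mem_boxSet {n : ℕ} (v : Fin n × Fin n) :
    (((v.1 : ℕ) : ℤ), ((v.2 : ℕ) : ℤ)) ∈ boxSet n :=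
  ⟨Int.natCast_nonneg _, Int.ofNat_lt.2 v.1.isLt, Int.natCast_nonneg _, Int.ofNat_lt.2 v.2.isLt⟩

lemma exists_blockAt_limitConfig_eq {n : ℕ} {p : Fin n × Fin n → Bool} (hp : p ∈ Lang Xsub n) :
    ∃ y, blockAt limitConfig y n = p := by
  obtain ⟨x, hx, u, rfl⟩ := hp
  obtain ⟨m, a, w, hbox, heq⟩ := hx n u
  obtain ⟨c, hc⟩ := exists_sIter_eq_limitConfig m a
  refine ⟨w + c, funext fun v => ?_⟩
  have hv := cast_mem_boxSet v
  simp only [blockAt, heq _ hv, hc _ (hbox _ hv), add_right_comm]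

lemma blockAt_limitConfig_add_two_pow_smul {M n : ℕ} (hn : n ≤ 2 ^ M) {y s : ℤ × ℤ}
    (h : twoValEq (coarseIndex M n y + s) = twoValEq (coarseIndex M n y)) :
    blockAt limitConfig (y + (2 : ℤ) ^ M • s) n = blockAt limitConfig y n := by
  funext v
  simp only [blockAt, limitConfig]
  rw [show y + (2 : ℤ) ^ M • s + (((v.1 : ℕ) : ℤ), ((v.2 : ℕ) : ℤ)) + 1 =
      y + (((v.1 : ℕ) : ℤ), ((v.2 : ℕ) : ℤ)) + 1 + (2 : ℤ) ^ M • s by abel,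
    twoValEq_add_two_pow_smul]
  intro i hi
  rwa [eq_coarseIndex hn (cast_mem_boxSet v) hi]

lemma mem_gluingSet_limitConfig {M n : ℕ} (hn : n ≤ 2 ^ M) (y y' e : ℤ × ℤ) :
    y - y' + (2 : ℤ) ^ M • (coarseIndex M n y' - coarseIndex M n y + 1) + (2 : ℤ) ^ (M + 1) • e ∈
      gluingSet Xsub (blockAt limitConfig y n) (blockAt limitConfig y' n) := by
  obtain ⟨z, hz, hz'⟩ := exists_twoValEq_and_twoValEq_add (d := 1 + 2 • e)
    (by simp) (by simp) (twoValEq (coarseIndex M n y')) (twoValEq (coarseIndex M n y))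
  refine ⟨shiftC (y' + (2 : ℤ) ^ M • (z - coarseIndex M n y')) limitConfig,
    shiftC_mem_Xsub _ limitConfig_mem_Xsub, ?_, ?_⟩
  · rw [blockAt_shiftC, zero_add, blockAt_limitConfig_add_two_pow_smul hn]
    rwa [add_sub_cancel]
  · rw [blockAt_shiftC, show y - y' + (2 : ℤ) ^ M • (coarseIndex M n y' - coarseIndex M n y + 1) +
        (2 : ℤ) ^ (M + 1) • e + (y' + (2 : ℤ) ^ M • (z - coarseIndex M n y')) =
        y + (2 : ℤ) ^ M • (z - coarseIndex M n y + (1 + 2 • e)) by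
      rw [pow_succ, mul_smul]; module]
    rw [blockAt_limitConfig_add_two_pow_smul hn]
    rwa [← add_assoc, add_sub_cancel]

lemma mem_gluingSet_zero {A : Type*} {X : Set (Config A)} (hX : X.Nonempty)
    (p q : Fin 0 × Fin 0 → A) (u : ℤ × ℤ) : u ∈ gluingSet X p q :=
  ⟨hX.some, hX.some_mem, Subsingleton.elim _ _, Subsingleton.elim _ _⟩

lemma netGluing_Xsub : NetGluing Xsub (fun n => 3 * n) := by
  have hpos (n : ℕ) (p : Fin n × Fin n → Bool) :
      ∃ y, p ∈ Lang Xsub n → blockAt limitConfig y n = p := by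
    by_cases hp : p ∈ Lang Xsub n
    · obtain ⟨y, hy⟩ := exists_blockAt_limitConfig_eq hp
      exact ⟨y, fun _ => hy⟩
    · exact ⟨0, fun h => absurd h hp⟩
  choose pos hpos using hpos
  let M (n : ℕ) : ℕ := Nat.log 2 n + 1
  have hM (n : ℕ) : n ≤ 2 ^ M n := (Nat.lt_pow_succ_log_self one_lt_two n).le
  refine ⟨fun n p q => pos n p - pos n q +
      (2 : ℤ) ^ M n • (coarseIndex (M n) n (pos n q) - coarseIndex (M n) n (pos n p) + 1),
    fun n _ _ => if n = 0 then 0 else 2 ^ (M n + 1) - n, fun n p hp q hq => ?_⟩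
  rcases eq_or_ne n 0 with rfl | hn
  · exact ⟨fun v _ => mem_gluingSet_zero ⟨_, limitConfig_mem_Xsub⟩ _ _ _, by simp⟩
  have hle : n ≤ 2 ^ (M n + 1) := (hM n).trans (Nat.pow_le_pow_right two_pos (M n).le_succ)
  refine ⟨fun v _ => ?_, ?_⟩
  · simp only [if_neg hn, Nat.cast_sub hle, Nat.cast_pow, Nat.cast_ofNat, add_sub_cancel]
    have := mem_gluingSet_limitConfig (hM n) (pos n p) (pos n q) v
    rwa [hpos n p hp, hpos n q hq] at this
  · have := Nat.pow_log_le_self 2 hn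
    simp only [if_neg hn, M, pow_succ] at this ⊢
    omega

/-- The substitution subshift `X_s` is linearly net gluing. -/
theorem stmt19 : LinearlyNetGluing Xsub :=
  ⟨fun n => 3 * n, fun _ _ h => Nat.mul_le_mul_left 3 h,
    ⟨3, by norm_num, fun n => by push_cast; exact le_rfl⟩, netGluing_Xsub⟩
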